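/- Let p be a prime and A ⊆ 𝔽_p with |A| > 1. Then there exists d ∈ 𝔽_p with d ≠ 0 such that |A| · (g(d·A) + 1) ≥ 2p − |A| − 1 (equivalently, sup_{d ≠ 0} g(d·A) ≥ 2p/|A| − 2 − 1/|A|). -/

import Mathlib

/-!
Suppose the bound fails for every dilate and let `N = ⌊(2p - 2)/|A|⌋ - 1`. Then every progression
`c + u, …, c + N u` with `u ≠ 0` meets `A`, so `F(c, u) = ∏_{i ≤ N, a ∈ A} (c + i u - a)` vanishes
off the line `u = 0`. Summing `F(c, u)` over `u ∈ 𝔽_pˣ` shows that `h ^ N`, `h = ∏_{a ∈ A} (X - a)`,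
agrees on `𝔽_p` with a polynomial of degree `≤ N|A| - (p - 1)`. That is impossible: write
`h ^ N = X ^ p W + V`; since `X ^ p = X` on `𝔽_p`, `V` has small degree. The Wronskian of `W` and
`V` equals that of `W` and `h ^ N`, so it is divisible by `h ^ (N - 1)`, yet its degree is below
`(N - 1)|A|`; hence it vanishes. This gives `N h' W = h W'`, and since `h` has simple roots,
`h ^ N ∣ W`, contradicting `deg W < N|A|`.
-/

/-- The largest gap of `A ⊆ 𝔽_p`: the largest `g` such that some translate of the
residues of `{1, …, g}` is disjoint from `A`. -/
noncomputable def gap (p : ℕ) (A : Finset (ZMod p)) : ℕ :=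
  sSup {g : ℕ | ∃ t : ZMod p, ∀ i : ℕ, 1 ≤ i → i ≤ g → ((i : ZMod p) + t) ∉ A}

open Polynomial Finset Lagrange

namespace Polynomial

section Nodal

variable {K : Type*} [Field K]

theorem nodal_id_dvd_of_eval_eq_zero {s : Finset K} {W : K[X]} (hW : ∀ a ∈ s, W.eval a = 0) :
    nodal s id ∣ W :=
  Finset.prod_dvd_of_coprime ((pairwise_coprime_X_sub_C Function.injective_id).set_pairwise _)
    fun a ha => dvd_iff_isRoot.mpr (hW a ha)

theorem eval_derivative_nodal_id_ne_zero {s : Finset K} {a : K} (ha : a ∈ s) :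
    (derivative (nodal s id)).eval a ≠ 0 := by
  classical
  rw [← id_eq a, eval_nodal_derivative_eval_node_eq ha]
  exact eval_nodal_not_at_node fun b hb => (ne_of_mem_erase hb).symm

/-- Each root `a` of `h = nodal s id` is simple, so `j h' W = h W'` forces `W (a) = 0`;
dividing `W` by `h` lowers `j` by one. -/
theorem nodal_id_pow_dvd_of_derivative_eq {p : ℕ} [CharP K p] (s : Finset K) {j : ℕ}
    (hj : j < p) {W : K[X]}
    (hW : C (j : K) * derivative (nodal s id) * W = nodal s id * derivative W) :
    nodal s id ^ j ∣ W := by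
  induction j generalizing W with
  | zero => simp
  | succ j ih =>
    have hj0 : ((j + 1 : ℕ) : K) ≠ 0 := by
      rw [Ne, CharP.cast_eq_zero_iff K p]
      exact fun hdvd => (Nat.le_of_dvd j.succ_pos hdvd).not_gt hj
    obtain ⟨V, rfl⟩ : nodal s id ∣ W := nodal_id_dvd_of_eval_eq_zero fun a ha => by
      have hroot : (nodal s id).eval a = 0 := eval_nodal_at_node (v := id) ha
      have := congrArg (eval a) hW
      simp only [eval_mul, eval_C, hroot, zero_mul, mul_eq_zero] at this
      exact this.resolve_left (not_or.mpr ⟨hj0, eval_derivative_nodal_id_ne_zero ha⟩)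
    have hV : C (j : K) * derivative (nodal s id) * V = nodal s id * derivative V := by
      refine mul_left_cancel₀ (nodal_ne_zero (s := s) (v := id)) ?_
      rw [derivative_mul, Nat.cast_succ, C_add, C_1] at hW
      linear_combination hW
    rw [pow_succ']
    exact mul_dvd_mul_left _ (ih (by omega) hV)

end Nodal

section Wronskian

variable {R : Type*} [CommRing R]

theorem wronskian_pow_succ_right (W h : R[X]) (M : ℕ) :
    wronskian W (h ^ (M + 1)) =
      h ^ M * (C ((M + 1 : ℕ) : R) * derivative h * W - h * derivative W) := by
  rw [wronskian, derivative_pow, Nat.add_sub_cancel, pow_succ]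
  ring

theorem wronskian_X_pow_mul_self (p : ℕ) [CharP R p] (W : R[X]) :
    wronskian W (X ^ p * W) = 0 := by
  simp only [wronskian, derivative_mul, derivative_X_pow, CharP.cast_eq_zero, C_0, zero_mul,
    zero_add]
  ring

theorem C_mul_derivative_mul_eq_of_wronskian_eq {K : Type*} [Field K] {W V h : K[X]} {M : ℕ}
    (hwr : wronskian W (h ^ (M + 1)) = wronskian W V)
    (hdeg : W.natDegree + V.natDegree ≤ M * h.natDegree) :
    C ((M + 1 : ℕ) : K) * derivative h * W = h * derivative W := by
  by_contra hne
  have hD0 := sub_ne_zero.mpr hne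
  have hh0 : h ≠ 0 := by
    rintro rfl
    simp at hne
  have hwr0 : wronskian W V ≠ 0 := by
    rw [← hwr, wronskian_pow_succ_right]
    exact mul_ne_zero (pow_ne_zero _ hh0) hD0
  have hlt := natDegree_wronskian_lt_add hwr0
  rw [← hwr, wronskian_pow_succ_right, natDegree_mul (pow_ne_zero _ hh0) hD0, natDegree_pow] at hlt
  omega

end Wronskian

section TotalDegree

variable {R : Type*} [CommRing R]

/-- `F : R[X][X]`, read as `∑ⱼ Fⱼ(X) Yʲ`, has total degree at most `n`. -/
def TotalDegreeLE (F : R[X][X]) (n : ℕ) : Prop :=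
  ∀ j m, n < j + m → (F.coeff j).coeff m = 0

theorem totalDegreeLE_one : TotalDegreeLE (1 : R[X][X]) 0 := by
  intro j m hjm
  rcases j with _ | j
  · simp [coeff_one, show m ≠ 0 by omega]
  · simp [coeff_one]

theorem totalDegreeLE_linear (a b : R) : TotalDegreeLE (C (X - C a) + C (C b) * X) 1 := by
  intro j m hjm
  rcases j with _ | _ | j
  · simp [coeff_X, coeff_C, show m ≠ 0 by omega]
    omega
  · simp [coeff_C, show m ≠ 0 by omega]
  · simp

theorem TotalDegreeLE.mul {F G : R[X][X]} {m n : ℕ} (hF : TotalDegreeLE F m)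
    (hG : TotalDegreeLE G n) : TotalDegreeLE (F * G) (m + n) := by
  intro j l hjl
  rw [coeff_mul, finsetSum_coeff]
  refine sum_eq_zero fun q hq => ?_
  rw [coeff_mul]
  refine sum_eq_zero fun r hr => ?_
  rw [HasAntidiagonal.mem_antidiagonal] at hq hr
  rcases lt_or_ge m (q.1 + r.1) with hm | hm
  · rw [hF _ _ hm, zero_mul]
  · rw [hG _ _ (by omega), mul_zero]

theorem TotalDegreeLE.prod {ι : Type*} {s : Finset ι} {F : ι → R[X][X]} {n : ι → ℕ}
    (hF : ∀ i ∈ s, TotalDegreeLE (F i) (n i)) : TotalDegreeLE (∏ i ∈ s, F i) (∑ i ∈ s, n i) := by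
  classical
  induction s using Finset.induction_on with
  | empty => exact totalDegreeLE_one
  | insert i s hi ih =>
    rw [prod_insert hi, sum_insert hi]
    exact (hF i (mem_insert_self i s)).mul (ih fun k hk => hF k (mem_insert_of_mem hk))

theorem TotalDegreeLE.natDegree_le {F : R[X][X]} {n : ℕ} (hF : TotalDegreeLE F n) :
    F.natDegree ≤ n :=
  natDegree_le_iff_coeff_eq_zero.mpr fun j hj => ext fun m => hF j m (by omega)

theorem TotalDegreeLE.natDegree_coeff_le {F : R[X][X]} {n : ℕ} (hF : TotalDegreeLE F n)
    (j : ℕ) : (F.coeff j).natDegree ≤ n - j :=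
  natDegree_le_iff_coeff_eq_zero.mpr fun m hm => hF j m (by omega)

end TotalDegree

section FiniteField

variable {K : Type*} [Field K] [Fintype K] [DecidableEq K]

theorem sum_units_evalEval {F : K[X][X]} {n : ℕ} (hF : F.natDegree ≤ n) (c : K) :
    ∑ u : Kˣ, F.evalEval c u =
      -∑ j ∈ range (n + 1), if Fintype.card K - 1 ∣ j then (F.coeff j).eval c else 0 := by
  have hexpand : ∀ u : K, F.evalEval c u = ∑ j ∈ range (n + 1), (F.coeff j).eval c * u ^ j := by
    intro u
    rw [evalEval, eval_eq_sum_range' (p := F) (n := n + 1) (by omega), eval_finsetSum]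
    simp only [eval_mul, eval_pow, eval_C]
  simp_rw [hexpand]
  rw [Finset.sum_comm]
  simp_rw [← Finset.mul_sum, FiniteField.sum_pow_units]
  rw [← Finset.sum_neg_distrib]
  refine sum_congr rfl fun j _ => ?_
  split_ifs <;> simp

/-- Summing `F(c, u)` over `u ∈ Kˣ` keeps only the coefficients `Fⱼ` with `q - 1 ∣ j`. -/
theorem exists_natDegree_le_eval_coeff_zero_eq {F : K[X][X]} {n : ℕ} (hF : TotalDegreeLE F n)
    (hvan : ∀ c u : K, u ≠ 0 → F.evalEval c u = 0) :
    ∃ T : K[X], T.natDegree ≤ n - (Fintype.card K - 1) ∧ ∀ c, (F.coeff 0).eval c = T.eval c := by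
  refine ⟨-∑ j ∈ range n, if Fintype.card K - 1 ∣ j + 1 then F.coeff (j + 1) else 0, ?_, ?_⟩
  · rw [natDegree_neg]
    refine natDegree_sum_le_of_forall_le _ _ fun j _ => ?_
    split_ifs with hdvd
    · exact (hF.natDegree_coeff_le _).trans (by have := Nat.le_of_dvd j.succ_pos hdvd; omega)
    · simp
  · intro c
    have hsum := sum_units_evalEval hF.natDegree_le c
    rw [sum_eq_zero fun (u : Kˣ) _ => hvan c u u.ne_zero, sum_range_succ', if_pos (dvd_zero _),
      eq_comm, neg_eq_zero] at hsum
    simp only [eval_neg, eval_finsetSum, apply_ite (eval c), eval_zero]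
    linear_combination hsum

end FiniteField

section Progression

variable {K : Type*} [Field K]

/-- `F(c, u) = ∏_{1 ≤ i ≤ N, a ∈ A} (c + i u - a)` vanishes exactly when the progression
`c + u, …, c + N u` meets `A`. -/
noncomputable def progressionPolynomial (A : Finset K) (N : ℕ) : K[X][X] :=
  ∏ x ∈ Icc 1 N ×ˢ A, (C (X - C x.2) + C (C (x.1 : K)) * X)

theorem totalDegreeLE_progressionPolynomial (A : Finset K) (N : ℕ) :
    TotalDegreeLE (progressionPolynomial A N) (N * #A) := by
  have h := TotalDegreeLE.prod (s := Icc 1 N ×ˢ A) (n := fun _ => 1) fun x _ =>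
    totalDegreeLE_linear x.2 (x.1 : K)
  rwa [sum_const, card_product, Nat.card_Icc, smul_eq_mul, mul_one, Nat.add_sub_cancel] at h

theorem coeff_zero_progressionPolynomial (A : Finset K) (N : ℕ) :
    (progressionPolynomial A N).coeff 0 = nodal A id ^ N := by
  rw [progressionPolynomial, coeff_zero_eq_eval_zero, eval_prod, prod_product]
  simp [nodal]

theorem evalEval_progressionPolynomial (A : Finset K) (N : ℕ) (c u : K) :
    (progressionPolynomial A N).evalEval c u = ∏ x ∈ Icc 1 N ×ˢ A, (c - x.2 + x.1 * u) := by
  simp [progressionPolynomial, evalEval, eval_prod]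

end Progression

end Polynomial

namespace ZMod

variable {p : ℕ} [Fact p.Prime]

/-- On `𝔽_p` the polynomial `X ^ p * W + V` takes the same values as `X * W + V`. -/
theorem X_mul_divByMonic_add_modByMonic_eq {P T : (ZMod p)[X]} (hP : P.natDegree + 1 < 2 * p)
    (hT : T.natDegree < p) (heq : ∀ y, P.eval y = T.eval y) :
    X * (P /ₘ X ^ p) + P %ₘ X ^ p = T := by
  have hp := (Fact.out : p.Prime).one_lt
  have hmonic : (X ^ p : (ZMod p)[X]).Monic := monic_X_pow p
  refine eq_of_natDegree_lt_card_of_eval_eq _ _ Function.injective_id (fun y => ?_) ?_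
  · have hsplit := congrArg (eval y) (modByMonic_add_div P (X ^ p))
    rw [id_eq, ← heq, ← hsplit]
    simp [ZMod.pow_card, add_comm]
  · have hW : (X * (P /ₘ X ^ p)).natDegree < p := by
      refine (natDegree_mul_le ..).trans_lt ?_
      rw [natDegree_X, natDegree_divByMonic _ hmonic, natDegree_X_pow]
      omega
    have hV : (P %ₘ X ^ p).natDegree < p := by
      have hX : (X ^ p : (ZMod p)[X]) ≠ 1 := fun h => by
        have := congrArg natDegree h
        simp only [natDegree_X_pow, natDegree_one] at this
        omega
      simpa using natDegree_modByMonic_lt P hmonic hX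
    rw [ZMod.card]
    exact max_lt ((natDegree_add_le _ _).trans_lt (max_lt hW hV)) hT

theorem exists_eval_nodal_pow_ne_of_lt {A : Finset (ZMod p)} (hA : A.Nonempty)
    (hAp : #A < p) {N : ℕ} (hN0 : N ≠ 0) (hsmall : N * #A < p) {T : (ZMod p)[X]}
    (hT : T.natDegree ≤ N * #A - (p - 1)) : ∃ y, (nodal A id ^ N).eval y ≠ T.eval y := by
  by_contra! heq
  obtain ⟨a, ha⟩ := hA
  obtain ⟨y, hy⟩ : ∃ y, y ∉ A := by
    by_contra! hall
    exact hAp.ne (by rw [eq_univ_iff_forall.mpr hall, card_univ, ZMod.card])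
  have hTC : T = C (T.coeff 0) := eq_C_of_natDegree_le_zero (by omega)
  have ha0 := heq a
  have hy0 := heq y
  have hroot : (nodal A id).eval a = 0 := eval_nodal_at_node (v := id) ha
  rw [hTC, eval_C, eval_pow, hroot, zero_pow hN0] at ha0
  rw [hTC, eval_C, ← ha0, eval_pow] at hy0
  exact pow_ne_zero N (eval_nodal_not_at_node fun b hb (h : y = b) => hy (h ▸ hb)) hy0

theorem exists_eval_nodal_pow_ne_of_le {A : Finset (ZMod p)} (hA : 2 ≤ #A) {N : ℕ}
    (hN : N * #A + #A + 2 ≤ 2 * p) (hbig : p ≤ N * #A) {T : (ZMod p)[X]}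
    (hT : T.natDegree ≤ N * #A - (p - 1)) : ∃ y, (nodal A id ^ N).eval y ≠ T.eval y := by
  by_contra! heq
  set h := nodal A id
  set W := h ^ N /ₘ X ^ p
  set V := h ^ N %ₘ X ^ p
  have hh0 : h ≠ 0 := nodal_ne_zero
  have hhdeg : h.natDegree = #A := natDegree_nodal
  have hPdeg : (h ^ N).natDegree = N * #A := by rw [natDegree_pow, hhdeg]
  have hsplit : X ^ p * W + V = h ^ N := by rw [add_comm]; exact modByMonic_add_div _ _
  have hWdeg : W.natDegree = N * #A - p := by
    rw [natDegree_divByMonic _ (monic_X_pow p), hPdeg, natDegree_X_pow]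
  have hW0 : W ≠ 0 := by
    rw [Ne, divByMonic_eq_zero_iff (monic_X_pow p), degree_X_pow,
      degree_eq_natDegree (pow_ne_zero _ hh0), hPdeg, Nat.cast_lt]
    omega
  have hXWV : X * W + V = T := X_mul_divByMonic_add_modByMonic_eq (by omega) (by omega) heq
  have hVdeg : V.natDegree ≤ N * #A - (p - 1) := by
    rw [eq_sub_of_add_eq' hXWV]
    refine (natDegree_sub_le _ _).trans (max_le hT ((natDegree_mul_le ..).trans ?_))
    rw [natDegree_X, hWdeg]
    omega
  obtain ⟨M, rfl⟩ : ∃ M, N = M + 1 := Nat.exists_eq_add_one.mpr <| Nat.pos_of_ne_zero <| by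
    rintro rfl
    exact (Fact.out : p.Prime).ne_zero (Nat.le_zero.mp (zero_mul #A ▸ hbig))
  have hwr : wronskian W (h ^ (M + 1)) = wronskian W V := by
    rw [← hsplit, wronskian_add_right, wronskian_X_pow_mul_self, zero_add]
  have hD := C_mul_derivative_mul_eq_of_wronskian_eq hwr <| by
    rw [hhdeg]
    have : (M + 1) * #A = M * #A + #A := by ring
    omega
  have hdvd := natDegree_le_of_dvd (nodal_id_pow_dvd_of_derivative_eq A (by nlinarith) hD) hW0
  rw [hPdeg] at hdvd
  omega

theorem exists_progression_disjoint {A : Finset (ZMod p)} (hA : 2 ≤ #A) (hAp : #A < p) {N : ℕ}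
    (hN : N * #A + #A + 2 ≤ 2 * p) :
    ∃ u : ZMod p, u ≠ 0 ∧ ∃ c : ZMod p, ∀ i ∈ Icc 1 N, c + (i : ZMod p) * u ∉ A := by
  by_contra! hblock
  have hN0 : N ≠ 0 := by
    rintro rfl
    obtain ⟨i, hi, -⟩ := hblock 1 one_ne_zero 0
    simp at hi
  obtain ⟨T, hT, heq⟩ := exists_natDegree_le_eval_coeff_zero_eq
    (totalDegreeLE_progressionPolynomial A N) fun c u hu => by
      obtain ⟨i, hi, hmem⟩ := hblock u hu c
      rw [evalEval_progressionPolynomial]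
      exact prod_eq_zero (i := (i, c + i * u)) (mem_product.mpr ⟨hi, hmem⟩) (by ring)
  rw [ZMod.card] at hT
  simp only [coeff_zero_progressionPolynomial] at heq
  obtain ⟨y, hy⟩ := (lt_or_ge (N * #A) p).elim
    (exists_eval_nodal_pow_ne_of_lt (card_pos.mp (by omega)) hAp hN0 · hT)
    (exists_eval_nodal_pow_ne_of_le hA hN · hT)
  exact hy (heq y)

end ZMod

theorem le_gap {p : ℕ} [NeZero p] {A : Finset (ZMod p)} (hA : A.Nonempty) {g : ℕ} {t : ZMod p}
    (ht : ∀ i : ℕ, 1 ≤ i → i ≤ g → (i : ZMod p) + t ∉ A) : g ≤ gap p A := by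
  refine le_csSup ⟨p - 1, fun g' ⟨t', ht'⟩ => ?_⟩ ⟨t, ht⟩
  by_contra! hg'
  obtain ⟨b, hb⟩ := hA
  have hval := (t' - b).val_lt
  refine ht' (p - (t' - b).val) (by omega) (by omega) ?_
  rwa [Nat.cast_sub hval.le, ZMod.natCast_self, ZMod.natCast_zmod_val, zero_sub, neg_sub,
    sub_add_cancel]

theorem ZMod.exists_le_gap_image_mul {p : ℕ} [Fact p.Prime] {A : Finset (ZMod p)} (hA : 2 ≤ #A)
    (hAp : #A < p) {N : ℕ} (hN : N * #A + #A + 2 ≤ 2 * p) :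
    ∃ d : ZMod p, d ≠ 0 ∧ N ≤ gap p (A.image (d * ·)) := by
  obtain ⟨u, hu, c, hprog⟩ := ZMod.exists_progression_disjoint hA hAp hN
  refine ⟨u⁻¹, inv_ne_zero hu, le_gap (card_pos.mp (by omega) |>.image _) (t := u⁻¹ * c) ?_⟩
  intro i hi1 hiN hmem
  obtain ⟨a, ha, hEq⟩ := mem_image.mp hmem
  refine hprog i (mem_Icc.mpr ⟨hi1, hiN⟩) ?_
  convert ha using 1
  apply mul_left_cancel₀ (inv_ne_zero hu)
  rw [hEq]
  field_simp
  ring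

theorem stmt_3 (p : ℕ) (hp : p.Prime) (A : Finset (ZMod p)) (hA : 1 < A.card) :
    ∃ d : ZMod p, d ≠ 0 ∧
      (A.card : ℤ) * (gap p (A.image (fun a => d * a)) + 1) ≥ 2 * p - A.card - 1 := by
  have := Fact.mk hp
  rcases (card_le_univ A).trans_eq (ZMod.card p) |>.lt_or_eq with hAp | hAp
  · set M := (2 * p - 2) / #A
    have hM1 : 1 ≤ M := (Nat.one_le_div_iff (by omega)).mpr (by omega)
    have hMle : (M - 1) * #A + #A ≤ 2 * p - 2 := by
      rw [← Nat.succ_mul, Nat.succ_eq_add_one, Nat.sub_add_cancel hM1]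
      exact Nat.div_mul_le_self _ _
    have hMgt : (2 * p - 2 : ℤ) < M * #A + #A := by
      rw [← Nat.cast_ofNat, ← Nat.cast_mul, ← Nat.cast_sub (by omega)]
      exact_mod_cast Nat.lt_div_mul_add (by omega)
    obtain ⟨d, hd, hgap⟩ := ZMod.exists_le_gap_image_mul hA hAp (N := M - 1) (by omega)
    refine ⟨d, hd, ?_⟩
    have : #A * M ≤ #A * (gap p (A.image (d * ·)) + 1) := Nat.mul_le_mul_left _ (by omega)
    linarith
  · refine ⟨1, one_ne_zero, ?_⟩
    rw [hAp]
    have : (0 : ℤ) ≤ gap p (A.image (1 * ·)) := by positivity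
    nlinarith
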